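/- Fix γ > 0. For every fixed r ≠ 0, the function x_{B,+} and its derivative converge pointwise to zero as B → +∞, and more precisely lim_{B→+∞} B·x_{B,+}(r) = sign(r)·(π/(2γ))·|r|^{−1} and lim_{B→+∞} B·(d/dr)x_{B,+}(r) = −(π/(2γ))·|r|^{−2}. -/

import Mathlib

/-!
For `B > 0` the map `F_B t = (2√(t² + B²/4) + B) t` (`XPlus.lhs B`) is an increasing bijection
of `ℝ` with positive derivative `F_B'`, so `x_{B,+}(r) = F_B⁻¹(π/(γ r))` is differentiable by the
inverse function theorem, with `x' = F_B'(x)⁻¹ · (-π/(γ r²))`. Since `|F_B t| ≥ 2B|t|`, we get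
`x = O(1/B)`; and with `s = √(x² + B²/4)` one has `B x - F_B(x)/2 = (B/2 - s) x = O(|x|³/B)`,
giving `B x → π/(2γr)`. For the derivative, `F_B'(t) = B · F_1'(t/B)` and `F_1'(0) = 2`.
-/

open Filter Topology

namespace XPlus

noncomputable def lhs (B t : ℝ) : ℝ := (2 * √(t ^ 2 + B ^ 2 / 4) + B) * t

noncomputable def lhsDeriv (B t : ℝ) : ℝ :=
  2 * √(t ^ 2 + B ^ 2 / 4) + 2 * t ^ 2 / √(t ^ 2 + B ^ 2 / 4) + B

variable {B : ℝ}

lemma two_mul_abs_le_abs_lhs (hB : 0 < B) (t : ℝ) : 2 * B * |t| ≤ |lhs B t| := by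
  have hs : B / 2 ≤ √(t ^ 2 + B ^ 2 / 4) :=
    Real.le_sqrt_of_sq_le (by nlinarith [sq_nonneg t])
  rw [lhs, abs_mul, abs_of_pos (by linarith : 0 < 2 * √(t ^ 2 + B ^ 2 / 4) + B)]
  nlinarith [abs_nonneg t]

/-- With `s = √(t² + B²/4)`: `B t - lhs B t / 2 = (B/2 - s) t` and `(s - B/2) B ≤ s² - B²/4 = t²`.
-/
lemma abs_mul_sub_lhs_div_two_le (hB : 0 < B) (t : ℝ) :
    |B * t - lhs B t / 2| ≤ |t| ^ 3 / B := by
  set s := √(t ^ 2 + B ^ 2 / 4)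
  have hs2 : s ^ 2 = t ^ 2 + B ^ 2 / 4 := Real.sq_sqrt (by positivity)
  have hs : B / 2 ≤ s := Real.le_sqrt_of_sq_le (by nlinarith [sq_nonneg t])
  have hrw : |B * t - lhs B t / 2| = (s - B / 2) * |t| := by
    rw [lhs, show B * t - (2 * s + B) * t / 2 = -((s - B / 2) * t) by ring, abs_neg, abs_mul,
      abs_of_nonneg (by linarith)]
  have hgap : (s - B / 2) * B ≤ |t| ^ 2 := by rw [sq_abs]; nlinarith
  rw [hrw, le_div_iff₀ hB, pow_succ]
  nlinarith [mul_le_mul_of_nonneg_right hgap (abs_nonneg t)]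

lemma hasDerivAt_lhs (hB : 0 < B) (t : ℝ) : HasDerivAt (lhs B) (lhsDeriv B t) t := by
  have hq : t ^ 2 + B ^ 2 / 4 ≠ 0 := by positivity
  have hsqrt : HasDerivAt (fun t => √(t ^ 2 + B ^ 2 / 4)) (t / √(t ^ 2 + B ^ 2 / 4)) t := by
    convert ((hasDerivAt_pow 2 t).add_const (B ^ 2 / 4)).sqrt hq using 1
    ring
  refine (((hsqrt.const_mul 2).add_const B).mul (hasDerivAt_id t)).congr_deriv ?_
  rw [lhsDeriv, id]
  ring

lemma lhsDeriv_pos (hB : 0 < B) (t : ℝ) : 0 < lhsDeriv B t := by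
  unfold lhsDeriv
  positivity

lemma strictMono_lhs (hB : 0 < B) : StrictMono (lhs B) :=
  strictMono_of_deriv_pos fun t => (hasDerivAt_lhs hB t).deriv ▸ lhsDeriv_pos hB t

lemma surjective_lhs (hB : 0 < B) : Function.Surjective (lhs B) := by
  have hcont : Continuous (lhs B) := by unfold lhs; fun_prop
  refine hcont.surjective ?_ ?_
  · refine tendsto_atTop_mono' _ ?_ (tendsto_id.const_mul_atTop hB)
    filter_upwards [eventually_ge_atTop 0] with t ht
    have := Real.sqrt_nonneg (t ^ 2 + B ^ 2 / 4)
    rw [lhs, id]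
    nlinarith
  · refine tendsto_atBot_mono' _ ?_ (tendsto_id.const_mul_atBot hB)
    filter_upwards [eventually_le_atBot 0] with t ht
    have := Real.sqrt_nonneg (t ^ 2 + B ^ 2 / 4)
    rw [lhs, id]
    nlinarith

lemma hasDerivAt_of_lhs_comp_eq (hB : 0 < B) {f g : ℝ → ℝ} {g' r : ℝ} (hg : HasDerivAt g g' r)
    (hfg : ∀ᶠ s in 𝓝 r, lhs B (f s) = g s) :
    HasDerivAt f ((lhsDeriv B (f r))⁻¹ * g') r := by
  set e := (strictMono_lhs hB).orderIsoOfSurjective (lhs B) (surjective_lhs hB)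
  have he : ∀ y, lhs B (e.symm y) = y :=
    StrictMono.orderIsoOfSurjective_self_symm_apply (lhs B) (strictMono_lhs hB) _
  have hf : f =ᶠ[𝓝 r] e.symm ∘ g :=
    hfg.mono fun s hs => (strictMono_lhs hB).injective (by rw [Function.comp_apply, he, hs])
  have hfr : e.symm (g r) = f r := hf.eq_of_nhds.symm
  have he' : HasDerivAt e.symm (lhsDeriv B (f r))⁻¹ (g r) :=
    .of_local_left_inverse e.symm.continuous.continuousAt (hfr ▸ hasDerivAt_lhs hB (f r))
      (lhsDeriv_pos hB _).ne' (.of_forall he)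
  exact (he'.comp r hg).congr_of_eventuallyEq hf

lemma lhsDeriv_eq_mul_lhsDeriv_one (hB : 0 < B) (t : ℝ) :
    lhsDeriv B t = B * lhsDeriv 1 (t / B) := by
  have hsqrt : √((t / B) ^ 2 + 1 ^ 2 / 4) = √(t ^ 2 + B ^ 2 / 4) / B := by
    rw [show (t / B) ^ 2 + 1 ^ 2 / 4 = (t ^ 2 + B ^ 2 / 4) / B ^ 2 by field_simp,
      Real.sqrt_div' _ (sq_nonneg B), Real.sqrt_sq hB.le]
  rw [lhsDeriv, lhsDeriv, hsqrt]
  field_simp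

lemma tendsto_mul_inv_lhsDeriv {t : ℝ → ℝ} (ht : Tendsto t atTop (𝓝 0)) :
    Tendsto (fun B => B * (lhsDeriv B (t B))⁻¹) atTop (𝓝 2⁻¹) := by
  have hcont : ContinuousAt (lhsDeriv 1) 0 := by
    unfold lhsDeriv
    fun_prop (disch := positivity)
  have h0 : lhsDeriv 1 0 = 2 := by norm_num [lhsDeriv]
  have hlim : Tendsto (fun B => lhsDeriv 1 (t B / B)) atTop (𝓝 2) :=
    h0 ▸ hcont.tendsto.comp (ht.div_atTop tendsto_id)
  refine (hlim.inv₀ two_ne_zero).congr' ?_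
  filter_upwards [eventually_gt_atTop 0] with B hB
  rw [lhsDeriv_eq_mul_lhsDeriv_one hB, mul_inv, ← mul_assoc, mul_inv_cancel₀ hB.ne', one_mul]

lemma tendsto_zero_of_lhs_eq {t : ℝ → ℝ} {y : ℝ} (h : ∀ᶠ B in atTop, lhs B (t B) = y) :
    Tendsto t atTop (𝓝 0) := by
  refine squeeze_zero_norm' ?_
    ((tendsto_const_nhds (x := |y|)).div_atTop (tendsto_id.const_mul_atTop two_pos))
  filter_upwards [h, eventually_gt_atTop 0] with B hy hB
  rw [Real.norm_eq_abs, id, le_div_iff₀ (by positivity), ← hy]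
  linarith [two_mul_abs_le_abs_lhs hB (t B)]

lemma tendsto_mul_of_lhs_eq {t : ℝ → ℝ} {y : ℝ} (h : ∀ᶠ B in atTop, lhs B (t B) = y) :
    Tendsto (fun B => B * t B) atTop (𝓝 (y / 2)) := by
  have hcubic : Tendsto (fun B => |t B| ^ 3 / B) atTop (𝓝 0) := by
    simpa using ((tendsto_zero_of_lhs_eq h).abs.pow 3).div_atTop tendsto_id
  rw [tendsto_iff_norm_sub_tendsto_zero]
  refine squeeze_zero' (.of_forall fun _ => norm_nonneg _) ?_ hcubic
  filter_upwards [h, eventually_gt_atTop 0] with B hy hB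
  rw [Real.norm_eq_abs, ← hy]
  exact abs_mul_sub_lhs_div_two_le hB (t B)

lemma sign_mul_inv_abs (r : ℝ) : Real.sign r * |r|⁻¹ = r⁻¹ := by
  rcases lt_trichotomy r 0 with h | rfl | h
  · rw [Real.sign_of_neg h, abs_of_neg h, inv_neg, neg_one_mul, neg_neg]
  · simp
  · rw [Real.sign_of_pos h, abs_of_pos h, one_mul]

lemma abs_rpow_neg_two (r : ℝ) : |r| ^ (-(2 : ℝ)) = (r ^ 2)⁻¹ := by
  rw [Real.rpow_neg (abs_nonneg r), Real.rpow_two, sq_abs]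

end XPlus

open XPlus in
theorem stmt_3 (γ : ℝ)
    (x : ℝ → ℝ → ℝ)
    (hx : ∀ B : ℝ, 0 < B → ∀ r : ℝ, r ≠ 0 →
      (2 * Real.sqrt (x B r ^ 2 + B ^ 2 / 4) + B) * x B r = Real.pi / (γ * r)) :
    ∀ r : ℝ, r ≠ 0 →
      Tendsto (fun B => x B r) atTop (𝓝 0) ∧
      Tendsto (fun B => deriv (x B) r) atTop (𝓝 0) ∧
      Tendsto (fun B => B * x B r) atTop
        (𝓝 (Real.sign r * (Real.pi / (2 * γ)) * |r|⁻¹)) ∧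
      Tendsto (fun B => B * deriv (x B) r) atTop
        (𝓝 (-(Real.pi / (2 * γ)) * |r| ^ (-(2 : ℝ)))) := by
  intro r hr
  have hsol : ∀ᶠ B in atTop, lhs B (x B r) = Real.pi / (γ * r) :=
    (eventually_gt_atTop 0).mono fun B hB => hx B hB r hr
  have hrhs : HasDerivAt (fun s => Real.pi / (γ * s)) (Real.pi / γ * -(r ^ 2)⁻¹) r := by
    refine ((hasDerivAt_inv hr).const_mul (Real.pi / γ)).congr_of_eventuallyEq ?_
    exact .of_forall fun s => by ring
  have hBderiv : ∀ᶠ B in atTop,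
      B * deriv (x B) r = B * (lhsDeriv B (x B r))⁻¹ * (Real.pi / γ * -(r ^ 2)⁻¹) := by
    filter_upwards [eventually_gt_atTop 0] with B hB
    rw [mul_assoc, (hasDerivAt_of_lhs_comp_eq hB hrhs
      ((eventually_ne_nhds hr).mono fun s hs => hx B hB s hs)).deriv]
  have hBd := ((tendsto_mul_inv_lhsDeriv (tendsto_zero_of_lhs_eq hsol)).mul_const
    (Real.pi / γ * -(r ^ 2)⁻¹)).congr' (hBderiv.mono fun _ h => h.symm)
  refine ⟨tendsto_zero_of_lhs_eq hsol, ?_, ?_, ?_⟩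
  · refine (hBd.div_atTop tendsto_id).congr' ?_
    filter_upwards [eventually_gt_atTop 0] with B hB
    exact mul_div_cancel_left₀ _ hB.ne'
  · convert tendsto_mul_of_lhs_eq hsol using 2
    rw [mul_right_comm, sign_mul_inv_abs]
    ring
  · convert hBd using 2
    rw [abs_rpow_neg_two]
    ring
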